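/- Let (X,d) be a compact metric space and f_n: X → X continuous for each n ≥ 0. Suppose there exist two sequences {A_n} and {B_n} of nonempty closed subsets of X such that each is nested decreasing with diameters tending to 0, A_k ∩ B_k = ∅ for some k ≥ 1, and A_{n+1} ∪ B_{n+1} ⊆ f_{n-1}(A_n) ∩ f_{n-1}(B_n) for all n ≥ 1. Then there exists δ > 0 such that the non-autonomous system x_{n+1} = f_n(x_n) has an uncountable distributionally δ-scrambled set; i.e., it is distributionally δ-chaotic. -/

import Mathlib

open Filter Metric Set
open scoped Classical ENNReal NNReal

/-- Trajectory of the non-autonomous system: `orb f n = f_{n-1} ∘ ⋯ ∘ f_0`, `orb f 0 = id`. -/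
def orb {X : Type*} (f : ℕ → X → X) : ℕ → X → X
  | 0 => id
  | n + 1 => fun x => f n (orb f n x)

lemma orb_continuous {X : Type*} [TopologicalSpace X] (f : ℕ → X → X)
    (hf : ∀ n, Continuous (f n)) : ∀ n, Continuous (orb f n) := by
  intro n
  induction n with
  | zero => exact continuous_id
  | succ n ih => exact (hf n).comp ih

lemma exists_follower {X : Type*} [MetricSpace X] [CompactSpace X]
    (f : ℕ → X → X) (hf : ∀ n, Continuous (f n)) (S : ℕ → Set X)
    (hcl : ∀ i, IsClosed (S i)) (hne : ∀ i, (S i).Nonempty)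
    (hsub : ∀ i, S (i + 1) ⊆ f i '' S i) : ∃ x, ∀ i, orb f i x ∈ S i := by
  have horb := orb_continuous f hf
  have key : ∀ N, ∀ y ∈ S N, ∃ x, orb f N x = y ∧ ∀ i ≤ N, orb f i x ∈ S i := by
    intro N
    induction N with
    | zero =>
      intro y hy
      exact ⟨y, rfl, fun i hi => by simpa [Nat.le_zero.mp hi, orb] using hy⟩
    | succ N ih =>
      intro y hy
      obtain ⟨z, hz, hfz⟩ := hsub N hy
      obtain ⟨x, hx1, hx2⟩ := ih z hz
      refine ⟨x, by simp [orb, hx1, hfz], ?_⟩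
      intro i hi
      rcases Nat.eq_or_lt_of_le hi with h | h
      · subst h; show orb f (N+1) x ∈ S (N+1)
        have : orb f (N+1) x = y := by simp [orb, hx1, hfz]
        rw [this]; exact hy
      · exact hx2 i (Nat.lt_succ_iff.mp h)
  set F : ℕ → Set X := fun N => ⋂ i, ⋂ _ : i ≤ N, orb f i ⁻¹' S i with hF
  have hFcl : ∀ N, IsClosed (F N) :=
    fun N => isClosed_iInter fun i => isClosed_iInter fun _ => (hcl i).preimage (horb i)
  have hFne : ∀ N, (F N).Nonempty := by
    intro N
    obtain ⟨y, hy⟩ := hne N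
    obtain ⟨x, -, hx⟩ := key N y hy
    exact ⟨x, by simp only [hF, mem_iInter]; exact fun i hi => hx i hi⟩
  have hFsub : ∀ N, F (N + 1) ⊆ F N := by
    intro N x hx
    simp only [hF, mem_iInter] at hx ⊢
    exact fun i hi => hx i (hi.trans (Nat.le_succ N))
  obtain ⟨x, hx⟩ := IsCompact.nonempty_iInter_of_sequence_nonempty_isCompact_isClosed
    F hFsub hFne ((hFcl 0).isCompact) hFcl
  refine ⟨x, fun i => ?_⟩
  have := mem_iInter.mp hx i
  simp only [hF, mem_iInter] at this
  exact this i le_rfl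

def bSeq (k : ℕ) : ℕ → ℕ
  | 0 => 0
  | j + 1 => (j + 1) * (bSeq k j + k + 1)

lemma le_bSeq (k j : ℕ) : j ≤ bSeq k j := by
  induction j with
  | zero => simp [bSeq]
  | succ j ih =>
    have : (j + 1) * 1 ≤ (j + 1) * (bSeq k j + k + 1) := by
      apply Nat.mul_le_mul_left; omega
    simpa [bSeq] using this.trans_eq' (by ring)

lemma bSeq_lt_succ (k j : ℕ) : bSeq k j < bSeq k (j + 1) := by
  have : 1 * (bSeq k j + k + 1) ≤ (j + 1) * (bSeq k j + k + 1) := by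
    apply Nat.mul_le_mul_right; omega
  simp only [bSeq]; omega

lemma bSeq_strictMono (k : ℕ) : StrictMono (bSeq k) :=
  strictMono_nat_of_lt_succ (bSeq_lt_succ k)

lemma bSeq_succ (k j : ℕ) : bSeq k (j + 1) = (j + 1) * (bSeq k j + k + 1) := rfl

noncomputable def blkIdx (k i : ℕ) : ℕ :=
  Nat.find (⟨i, lt_of_lt_of_le (Nat.lt_succ_self i) (le_bSeq k (i+1))⟩ : ∃ j, i < bSeq k (j + 1))

lemma blkIdx_lt (k i : ℕ) : i < bSeq k (blkIdx k i + 1) := by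
  unfold blkIdx
  exact Nat.find_spec (⟨i, lt_of_lt_of_le (Nat.lt_succ_self i) (le_bSeq k (i+1))⟩ :
    ∃ j, i < bSeq k (j + 1))

lemma blkIdx_le (k i : ℕ) : bSeq k (blkIdx k i) ≤ i := by
  rcases Nat.eq_zero_or_pos (blkIdx k i) with h | h
  · rw [h]; simp [bSeq]
  · have h2 := Nat.find_min (⟨i, lt_of_lt_of_le (Nat.lt_succ_self i) (le_bSeq k (i+1))⟩ :
      ∃ j, i < bSeq k (j + 1)) (m := blkIdx k i - 1)
      (show blkIdx k i - 1 < blkIdx k i by omega)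
    push_neg at h2
    calc bSeq k (blkIdx k i) = bSeq k (blkIdx k i - 1 + 1) := by congr 1; omega
    _ ≤ i := h2

lemma blkIdx_eq (k i j : ℕ) (h1 : bSeq k j ≤ i) (h2 : i < bSeq k (j + 1)) :
    blkIdx k i = j := by
  have hl := blkIdx_le k i
  have hr := blkIdx_lt k i
  rcases lt_trichotomy (blkIdx k i) j with h | h | h
  · have : bSeq k (blkIdx k i + 1) ≤ bSeq k j := (bSeq_strictMono k).monotone (by omega)
    omega
  · exact h
  · have : bSeq k (j + 1) ≤ bSeq k (blkIdx k i) := (bSeq_strictMono k).monotone (by omega)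
    omega

def pat (a : ℕ → Bool) (j : ℕ) : Bool :=
  if j % 2 = 0 then false else a (Nat.unpair ((j - 1) / 2)).1

noncomputable def itin (k : ℕ) (a : ℕ → Bool) (i : ℕ) : Bool := pat a (blkIdx k i)

lemma itin_eq_false {k : ℕ} (a : ℕ → Bool) {i m : ℕ}
    (h1 : bSeq k (2 * m) ≤ i) (h2 : i < bSeq k (2 * m + 1)) : itin k a i = false := by
  rw [itin, blkIdx_eq k i (2 * m) h1 h2, pat, if_pos (by omega)]

lemma itin_eq_coord {k : ℕ} (a : ℕ → Bool) {i m : ℕ}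
    (h1 : bSeq k (2 * m + 1) ≤ i) (h2 : i < bSeq k (2 * m + 2)) :
    itin k a i = a (Nat.unpair m).1 := by
  have he : blkIdx k i = 2 * m + 1 := blkIdx_eq k i (2 * m + 1) h1 (by convert h2 using 2)
  have hm : (2 * m + 1 - 1) / 2 = m := by omega
  rw [itin, he, pat, if_neg (by omega), hm]

lemma limsup_eq_one_of (u : ℕ → ℝ) (h0 : ∀ n, 0 ≤ u n) (h1 : ∀ n, u n ≤ 1)
    (hfreq : ∀ η > 0, ∃ᶠ n in atTop, 1 - η ≤ u n) : limsup u atTop = 1 := by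
  have hb : IsBoundedUnder (· ≤ ·) atTop u := isBoundedUnder_of ⟨1, h1⟩
  apply le_antisymm
  · exact limsup_le_of_le (u := u) (isCoboundedUnder_le_of_le _ h0) (Eventually.of_forall (fun n => h1 n))
  · exact le_of_forall_sub_le fun η hη => le_limsup_of_frequently_le (hfreq η hη) hb

lemma liminf_eq_zero_of (u : ℕ → ℝ) (h0 : ∀ n, 0 ≤ u n) (h1 : ∀ n, u n ≤ 1)
    (hfreq : ∀ η > 0, ∃ᶠ n in atTop, u n ≤ η) : liminf u atTop = 0 := by
  apply le_antisymm
  · have key : ∀ η > (0:ℝ), liminf u atTop ≤ η := fun η hη =>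
      liminf_le_of_frequently_le (hfreq η hη) (isBoundedUnder_of ⟨0, h0⟩)
    exact le_of_forall_sub_le fun ε hε => by linarith [key ε hε]
  · exact le_liminf_of_le (u := u) (isCoboundedUnder_ge_of_le _ h1)
      (Eventually.of_forall (fun n => h0 n))

lemma uncountable_seq : Uncountable (ℕ → Bool) := by
  rw [← Cardinal.aleph0_lt_mk_iff]
  calc Cardinal.aleph0 < 2 ^ Cardinal.aleph0 := Cardinal.cantor _
  _ = Cardinal.mk (ℕ → Bool) := by rw [Cardinal.mk_arrow]; simp

noncomputable def distAvg' {X : Type*} [MetricSpace X] (f : ℕ → X → X)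
    (x y : X) (ε : ℝ) (n : ℕ) : ℝ :=
  (∑ i ∈ Finset.range n, if dist (orb f i x) (orb f i y) < ε then (1 : ℝ) else 0) / n

lemma distAvg'_nonneg {X : Type*} [MetricSpace X] (f : ℕ → X → X)
    (x y : X) (ε : ℝ) (n : ℕ) : 0 ≤ distAvg' f x y ε n := by
  apply div_nonneg _ (Nat.cast_nonneg n)
  apply Finset.sum_nonneg
  intro i _
  split <;> norm_num

lemma distAvg'_le_one {X : Type*} [MetricSpace X] (f : ℕ → X → X)
    (x y : X) (ε : ℝ) (n : ℕ) : distAvg' f x y ε n ≤ 1 := by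
  rw [distAvg']
  apply div_le_one_of_le₀ _ (Nat.cast_nonneg n)
  calc (∑ i ∈ Finset.range n, if dist (orb f i x) (orb f i y) < ε then (1 : ℝ) else 0)
      ≤ ∑ _i ∈ Finset.range n, (1:ℝ) := by
        apply Finset.sum_le_sum; intro i _; split <;> norm_num
  _ = n := by simp


/-- Cesàro average of the indicator of `dist (f_0^{p i} x) (f_0^{p i} y) < ε` over `i < n`. -/
noncomputable def distAvg {X : Type*} [MetricSpace X] (f : ℕ → X → X) (p : ℕ → ℕ)
    (x y : X) (ε : ℝ) (n : ℕ) : ℝ :=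
  (∑ i ∈ Finset.range n, if dist (orb f (p i) x) (orb f (p i) y) < ε then (1 : ℝ) else 0) / n

set_option maxHeartbeats 1000000 in
theorem stmt12 {X : Type*} [MetricSpace X] [CompactSpace X]
    (f : ℕ → X → X) (hf : ∀ n, Continuous (f n))
    (A B : ℕ → Set X)
    (hAne : ∀ n ≥ 1, (A n).Nonempty) (hBne : ∀ n ≥ 1, (B n).Nonempty)
    (hAcl : ∀ n ≥ 1, IsClosed (A n)) (hBcl : ∀ n ≥ 1, IsClosed (B n))
    (hAnest : ∀ n ≥ 1, A (n + 1) ⊆ A n) (hBnest : ∀ n ≥ 1, B (n + 1) ⊆ B n)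
    (hAdiam : Tendsto (fun n => Metric.diam (A n)) atTop (nhds 0))
    (hBdiam : Tendsto (fun n => Metric.diam (B n)) atTop (nhds 0))
    (hdisj : ∃ k ≥ 1, A k ∩ B k = ∅)
    (hexp : ∀ n ≥ 1, A (n + 1) ∪ B (n + 1) ⊆ f (n - 1) '' (A n) ∩ f (n - 1) '' (B n)) :
    ∃ δ > 0, ∃ D : Set X, ¬ D.Countable ∧ ∀ u ∈ D, ∀ v ∈ D, u ≠ v →
      (∀ ε > 0, limsup (distAvg f id u v ε) atTop = 1) ∧
      liminf (distAvg f id u v δ) atTop = 0 := by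
  obtain ⟨k, hk1, hkAB⟩ := hdisj
  have hconv : ∀ (u v : X) (ε : ℝ), distAvg f id u v ε = distAvg' f u v ε := by
    intro u v ε; funext n; simp [distAvg, distAvg']
  -- monotonicity of the nests
  have hAmono : ∀ m n : ℕ, 1 ≤ m → m ≤ n → A n ⊆ A m := by
    intro m n h1 hmn
    induction n, hmn using Nat.le_induction with
    | base => exact subset_rfl
    | succ n hn ih => exact (hAnest n (by omega)).trans ih
  have hBmono : ∀ m n : ℕ, 1 ≤ m → m ≤ n → B n ⊆ B m := by
    intro m n h1 hmn
    induction n, hmn using Nat.le_induction with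
    | base => exact subset_rfl
    | succ n hn ih => exact (hBnest n (by omega)).trans ih
  -- separation constant
  obtain ⟨r, hr0, hrd⟩ := EMetric.exists_pos_forall_lt_edist ((hAcl k hk1).isCompact) (hBcl k hk1)
    (disjoint_iff_inter_eq_empty.mpr hkAB)
  set δ : ℝ := (r : ℝ) with hδdef
  have hδ0 : (0:ℝ) < δ := by exact_mod_cast hr0
  have hsep : ∀ u ∈ A k, ∀ v ∈ B k, δ ≤ dist u v := by
    intro u hu v hv
    have h := hrd u hu v hv
    rw [edist_dist] at h
    have h2 : ((r : ℝ≥0∞)).toReal < dist u v :=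
      (ENNReal.lt_ofReal_iff_toReal_lt (by simp)).mp h
    simpa using h2.le
  -- follower points
  have hSexists : ∀ a : ℕ → Bool,
      ∃ x, ∀ i, orb f i x ∈ (if itin k a i then A (i+1) else B (i+1)) := by
    intro a
    apply exists_follower f hf
    · intro i
      split
      · exact hAcl (i+1) (by omega)
      · exact hBcl (i+1) (by omega)
    · intro i
      split
      · exact hAne (i+1) (by omega)
      · exact hBne (i+1) (by omega)
    · intro i y hy
      have hy' : y ∈ A (i+1+1) ∪ B (i+1+1) := by
        by_cases h : itin k a (i+1) = true
        · left; simpa [h] using hy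
        · simp only [Bool.not_eq_true] at h; right; simpa [h] using hy
      have h2 := hexp (i+1) (by omega) hy'
      rw [Nat.add_sub_cancel] at h2
      by_cases h : itin k a i = true
      · simp only [h, if_true]; exact h2.1
      · simp only [Bool.not_eq_true] at h; simp only [h, Bool.false_eq_true, if_false]
        exact h2.2
  choose p hp using hSexists
  have hOA : ∀ a i, itin k a i = true → orb f i (p a) ∈ A (i+1) := by
    intro a i h
    have := hp a i
    rwa [h, if_pos rfl] at this
  have hOB : ∀ a i, itin k a i = false → orb f i (p a) ∈ B (i+1) := by
    intro a i h
    have := hp a i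
    rwa [h] at this
  -- distance facts
  have hdisagree : ∀ a b i, k ≤ i + 1 → itin k a i ≠ itin k b i →
      δ ≤ dist (orb f i (p a)) (orb f i (p b)) := by
    intro a b i hki hne
    cases ha : itin k a i <;> cases hb : itin k b i
    · rw [ha, hb] at hne; exact absurd rfl hne
    · rw [dist_comm]
      exact hsep _ (hAmono k (i+1) hk1 hki (hOA b i hb)) _ (hBmono k (i+1) hk1 hki (hOB a i ha))
    · exact hsep _ (hAmono k (i+1) hk1 hki (hOA a i ha)) _ (hBmono k (i+1) hk1 hki (hOB b i hb))
    · rw [ha, hb] at hne; exact absurd rfl hne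
  have hagree : ∀ (a b : ℕ → Bool) (i : ℕ) (ε : ℝ), itin k a i = itin k b i →
      Metric.diam (A (i+1)) < ε → Metric.diam (B (i+1)) < ε →
      dist (orb f i (p a)) (orb f i (p b)) < ε := by
    intro a b i ε he hdA hdB
    cases hc : itin k a i
    · have h1 := hOB a i hc
      have h2 := hOB b i (by rw [← he, hc])
      calc dist (orb f i (p a)) (orb f i (p b)) ≤ Metric.diam (B (i+1)) :=
        dist_le_diam_of_mem isBounded_of_compactSpace h1 h2
      _ < ε := hdB
    · have h1 := hOA a i hc
      have h2 := hOA b i (by rw [← he, hc])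
      calc dist (orb f i (p a)) (orb f i (p b)) ≤ Metric.diam (A (i+1)) :=
        dist_le_diam_of_mem isBounded_of_compactSpace h1 h2
      _ < ε := hdA
  -- frequent closeness
  have hfreq1 : ∀ (a b : ℕ → Bool) (ε : ℝ), 0 < ε → ∀ η > (0:ℝ),
      ∃ᶠ n in atTop, 1 - η ≤ distAvg' f (p a) (p b) ε n := by
    intro a b ε hε η hη
    have hevA : ∀ᶠ n in atTop, Metric.diam (A n) < ε := hAdiam.eventually_lt_const hε
    have hevB : ∀ᶠ n in atTop, Metric.diam (B n) < ε := hBdiam.eventually_lt_const hε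
    obtain ⟨M, hM⟩ := eventually_atTop.mp (hevA.and hevB)
    obtain ⟨m0, hm0⟩ := exists_nat_ge ((M+1)/η)
    rw [frequently_atTop]
    intro N0
    set m := max m0 N0 with hm
    set N := bSeq k (2*m+1) with hNdef
    set L := max (bSeq k (2*m)) M with hLdef
    refine ⟨N, ?_, ?_⟩
    · calc N0 ≤ m := le_max_right _ _
      _ ≤ 2*m+1 := by omega
      _ ≤ N := le_bSeq k _
    · have hN0 : (0:ℝ) < N := by
        have : 1 ≤ N := le_trans (by omega) (le_bSeq k (2*m+1))
        exact_mod_cast Nat.lt_of_lt_of_le Nat.zero_lt_one this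
      have hind : ∀ i ∈ Finset.Ico L N,
          (if dist (orb f i (p a)) (orb f i (p b)) < ε then (1:ℝ) else 0) = 1 := by
        intro i hi
        rw [Finset.mem_Ico] at hi
        have hb1 : bSeq k (2*m) ≤ i := le_trans (le_max_left _ _) hi.1
        have hiM : M ≤ i := le_trans (le_max_right _ _) hi.1
        have he : itin k a i = itin k b i := by
          rw [itin_eq_false a hb1 hi.2, itin_eq_false b hb1 hi.2]
        exact if_pos (hagree a b i ε he (hM (i+1) (by omega)).1 (hM (i+1) (by omega)).2)
      have hsum : ((Finset.Ico L N).card : ℝ) ≤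
          ∑ i ∈ Finset.range N, (if dist (orb f i (p a)) (orb f i (p b)) < ε then (1:ℝ) else 0) := by
        have h1 : ((Finset.Ico L N).card : ℝ) =
            ∑ i ∈ Finset.Ico L N, (if dist (orb f i (p a)) (orb f i (p b)) < ε then (1:ℝ) else 0) := by
          rw [Finset.sum_congr rfl hind]; simp
        rw [h1]
        apply Finset.sum_le_sum_of_subset_of_nonneg
        · intro i hi
          rw [Finset.mem_Ico] at hi
          exact Finset.mem_range.mpr hi.2
        · intro i _ _
          split <;> norm_num
      have hcard : ((N:ℝ) - L) ≤ ((Finset.Ico L N).card : ℝ) := by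
        rw [Nat.card_Ico]
        rcases le_total L N with h | h
        · rw [Nat.cast_sub h]
        · have h0 : N - L = 0 := by omega
          rw [h0]
          have : (N:ℝ) ≤ (L:ℝ) := by exact_mod_cast h
          simp; linarith
      have hLN : (L:ℝ) ≤ η * N := by
        have hL2 : (L : ℝ) ≤ (bSeq k (2*m) : ℝ) + M := by
          have : L ≤ bSeq k (2*m) + M := max_le (by omega) (by omega)
          exact_mod_cast this
        have hNe : (N:ℝ) = (2*m+1) * ((bSeq k (2*m) : ℝ) + k + 1) := by
          rw [hNdef, bSeq_succ]; push_cast; ring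
        have hm0' : (M+1:ℝ) ≤ η * (2*m+1) := by
          have h1 : ((M+1:ℝ))/η ≤ m0 := hm0
          have h2 : (m0:ℝ) ≤ 2*m+1 := by
            have : m0 ≤ 2*m+1 := by omega
            exact_mod_cast this
          rw [div_le_iff₀ hη] at h1
          calc (M+1:ℝ) ≤ m0 * η := h1
          _ ≤ (2*m+1) * η := by nlinarith
          _ = η * (2*m+1) := by ring
        have hb0 : (0:ℝ) ≤ (bSeq k (2*m) : ℝ) := Nat.cast_nonneg _
        have hk0 : (0:ℝ) ≤ (k : ℝ) := Nat.cast_nonneg _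
        have hM0 : (0:ℝ) ≤ (M : ℝ) := Nat.cast_nonneg _
        calc (L:ℝ) ≤ (bSeq k (2*m) : ℝ) + M := hL2
        _ ≤ (M+1) * ((bSeq k (2*m) : ℝ) + k + 1) := by nlinarith [mul_nonneg hM0 hb0, mul_nonneg hM0 hk0]
        _ ≤ (η * (2*m+1)) * ((bSeq k (2*m) : ℝ) + k + 1) := by
          apply mul_le_mul_of_nonneg_right hm0' (by positivity)
        _ = η * N := by rw [hNe]; ring
      rw [distAvg']
      have hstep : (1:ℝ) - η ≤ ((N:ℝ) - L)/N := by
        rw [le_div_iff₀ hN0]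
        nlinarith
      calc (1:ℝ) - η ≤ ((N:ℝ) - L)/N := hstep
      _ ≤ ((Finset.Ico L N).card : ℝ)/N := by gcongr
      _ ≤ _ := by gcongr
  -- frequent separation
  have hfreq2 : ∀ (a b : ℕ → Bool) (i0 : ℕ), a i0 ≠ b i0 → ∀ η > (0:ℝ),
      ∃ᶠ n in atTop, distAvg' f (p a) (p b) δ n ≤ η := by
    intro a b i0 hab η hη
    obtain ⟨m0, hm0⟩ := exists_nat_ge (1/η)
    rw [frequently_atTop]
    intro N0
    set t := max m0 N0 with ht
    set m := Nat.pair i0 t with hmdef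
    have htm : t ≤ m := Nat.right_le_pair _ _
    set b1 := bSeq k (2*m+1) with hb1def
    set N := bSeq k (2*m+2) with hNdef
    have hb1N : b1 ≤ N := ((bSeq_strictMono k).monotone (by omega))
    have hN1 : 2*m+2 ≤ N := le_bSeq k _
    refine ⟨N, by omega, ?_⟩
    have hN0 : (0:ℝ) < N := by exact_mod_cast (by omega : 0 < N)
    have hkb1 : k + 1 ≤ b1 := by
      have h1 : bSeq k 1 ≤ b1 := (bSeq_strictMono k).monotone (by omega)
      have h2 : bSeq k 1 = k + 1 := by norm_num [bSeq]
      omega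
    have hind : ∀ i ∈ Finset.Ico b1 N,
        (if dist (orb f i (p a)) (orb f i (p b)) < δ then (1:ℝ) else 0) = 0 := by
      intro i hi
      rw [Finset.mem_Ico] at hi
      have h2 : i < bSeq k (2*m+1+1) := hi.2
      have hita : itin k a i = a i0 := by
        have := itin_eq_coord a hi.1 (by convert h2 using 2)
        rwa [Nat.unpair_pair] at this
      have hitb : itin k b i = b i0 := by
        have := itin_eq_coord b hi.1 (by convert h2 using 2)
        rwa [Nat.unpair_pair] at this
      have hne : itin k a i ≠ itin k b i := by rw [hita, hitb]; exact hab
      have hd := hdisagree a b i (by omega) hne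
      rw [if_neg (not_lt.mpr hd)]
    have hsplit : ∑ i ∈ Finset.range N, (if dist (orb f i (p a)) (orb f i (p b)) < δ then (1:ℝ) else 0)
        = ∑ i ∈ Finset.range b1, (if dist (orb f i (p a)) (orb f i (p b)) < δ then (1:ℝ) else 0)
          + ∑ i ∈ Finset.Ico b1 N, (if dist (orb f i (p a)) (orb f i (p b)) < δ then (1:ℝ) else 0) := by
      rw [Finset.range_eq_Ico, Finset.range_eq_Ico]
      exact (Finset.sum_Ico_consecutive _ (Nat.zero_le b1) hb1N).symm
    have hzero : ∑ i ∈ Finset.Ico b1 N, (if dist (orb f i (p a)) (orb f i (p b)) < δ then (1:ℝ) else 0) = 0 :=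
      Finset.sum_eq_zero hind
    have hfirst : ∑ i ∈ Finset.range b1, (if dist (orb f i (p a)) (orb f i (p b)) < δ then (1:ℝ) else 0) ≤ b1 := by
      calc ∑ i ∈ Finset.range b1, (if dist (orb f i (p a)) (orb f i (p b)) < δ then (1:ℝ) else 0)
          ≤ ∑ _i ∈ Finset.range b1, (1:ℝ) := by
            apply Finset.sum_le_sum; intro i _; split <;> norm_num
      _ = b1 := by simp
    have hb1η : (b1:ℝ) ≤ η * N := by
      have hNe : (N:ℝ) = (2*m+2) * ((b1:ℝ) + k + 1) := by
        have e : 2*m+2 = 2*m+1+1 := by omega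
        have h3 : bSeq k (2*m+2) = (2*m+1+1) * (bSeq k (2*m+1) + k + 1) := by
          rw [e, bSeq_succ]
        rw [hNdef, hb1def, h3]; push_cast; ring
      have hm0' : (1:ℝ) ≤ η * (2*m+2) := by
        have h1 : (1:ℝ)/η ≤ m0 := hm0
        rw [div_le_iff₀ hη] at h1
        have h2 : (m0:ℝ) ≤ 2*m+2 := by
          have : m0 ≤ 2*m+2 := by omega
          exact_mod_cast this
        nlinarith
      have hb0 : (0:ℝ) ≤ (b1 : ℝ) := Nat.cast_nonneg _
      have hk0 : (0:ℝ) ≤ (k : ℝ) := Nat.cast_nonneg _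
      calc (b1:ℝ) ≤ 1 * ((b1:ℝ) + k + 1) := by linarith
      _ ≤ (η * (2*m+2)) * ((b1:ℝ) + k + 1) := by
        apply mul_le_mul_of_nonneg_right hm0' (by positivity)
      _ = η * N := by rw [hNe]; ring
    rw [distAvg', hsplit, hzero, add_zero, div_le_iff₀ hN0]
    calc ∑ i ∈ Finset.range b1, (if dist (orb f i (p a)) (orb f i (p b)) < δ then (1:ℝ) else 0)
        ≤ b1 := hfirst
    _ ≤ η * N := hb1η
  -- injectivity
  have hinj : Function.Injective p := by
    intro a b hab
    by_contra hne
    obtain ⟨i0, hi0⟩ := Function.ne_iff.mp hne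
    set m := Nat.pair i0 0 with hmdef
    set i := bSeq k (2*m+1) with hidef
    have h2 : i < bSeq k (2*m+1+1) := bSeq_lt_succ k _
    have hita : itin k a i = a i0 := by
      have := itin_eq_coord a (le_refl i) (by convert h2 using 2)
      rwa [Nat.unpair_pair] at this
    have hitb : itin k b i = b i0 := by
      have := itin_eq_coord b (le_refl i) (by convert h2 using 2)
      rwa [Nat.unpair_pair] at this
    have hkb1 : k + 1 ≤ i := by
      have ha1 : bSeq k 1 ≤ i := (bSeq_strictMono k).monotone (by omega)
      have ha2 : bSeq k 1 = k + 1 := by norm_num [bSeq]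
      omega
    have hd := hdisagree a b i (by omega) (by rw [hita, hitb]; exact hi0)
    rw [hab] at hd
    simp only [dist_self] at hd
    linarith
  refine ⟨δ, hδ0, Set.range p, ?_, ?_⟩
  · intro hc
    have hcnt : Countable (ℕ → Bool) := by
      have h1 : Countable ↥(Set.range p) := hc.to_subtype
      exact Countable.of_equiv _ (Equiv.ofInjective p hinj).symm
    exact absurd hcnt (@not_countable _ uncountable_seq)
  · rintro u ⟨a, rfl⟩ v ⟨b, rfl⟩ huv
    have hab : a ≠ b := fun h => huv (by rw [h])
    obtain ⟨i0, hi0⟩ := Function.ne_iff.mp hab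
    constructor
    · intro ε hε
      rw [hconv]
      exact limsup_eq_one_of _ (distAvg'_nonneg f _ _ _) (distAvg'_le_one f _ _ _)
        (hfreq1 a b ε hε)
    · rw [hconv]
      exact liminf_eq_zero_of _ (distAvg'_nonneg f _ _ _) (distAvg'_le_one f _ _ _)
        (hfreq2 a b i0 hi0)
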